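/- Let g : ℝ → ℝ be continuous with lim_{x→±∞} g(x) = 0, and suppose G(x) = g(x) + (1/2)(μ−ν) ln(x²+1) is even and satisfies 0 ≤ G(x) − G(y) ≤ (μ−ν)(ln(x/y) + 2) for all 0 < y ≤ x. Then for every x ≠ 0, (1/x)·h⁻¹(x) ≤ (1/ν) |x|^(ν−1) (x²+1)^((μ−ν)/2) e^(g(x)) and (1/x)·h⁻¹(x) ≥ e^(1−ν−6(μ−ν)) |x|^(ν−1) (x²+1)^((μ−ν)/2) e^(g(x)). -/

import Mathlib

open MeasureTheory Real Filter Set Bornology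

/-- `h⁻¹(x) = ∫₀ˣ |y|^(ν−1)(y²+1)^((μ−ν)/2) e^(g(y)) dy`. -/
noncomputable def hInv (μ ν : ℝ) (g : ℝ → ℝ) (x : ℝ) : ℝ :=
  ∫ y in (0:ℝ)..x, |y| ^ (ν - 1) * (y ^ 2 + 1) ^ ((μ - ν) / 2) * Real.exp (g y)

/-- `(h⁻¹)'(x) = |x|^(ν−1)(x²+1)^((μ−ν)/2) e^(g(x))`. -/
noncomputable def hInvDeriv (μ ν : ℝ) (g : ℝ → ℝ) (x : ℝ) : ℝ :=
  |x| ^ (ν - 1) * (x ^ 2 + 1) ^ ((μ - ν) / 2) * Real.exp (g x)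

/-- The constant `κ = κ(g)` determined by `∫_ℝ κ/(x h⁻¹(x) (h⁻¹)'(x)) dx = (μ−ν)π`. -/
noncomputable def kappa (μ ν : ℝ) (g : ℝ → ℝ) : ℝ :=
  (μ - ν) * Real.pi / ∫ x : ℝ, 1 / (x * hInv μ ν g x * hInvDeriv μ ν g x)

/-- `F'(x) = κ/(x h⁻¹(x) (h⁻¹)'(x))`. -/
noncomputable def Fder (μ ν : ℝ) (g : ℝ → ℝ) (x : ℝ) : ℝ :=
  kappa μ ν g / (x * hInv μ ν g x * hInvDeriv μ ν g x)

/-- `F = F_g`, the antiderivative of `Fder` with `F(+∞) = 0`. -/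
noncomputable def Fg (μ ν : ℝ) (g : ℝ → ℝ) (x : ℝ) : ℝ :=
  -∫ y in Set.Ioi x, Fder μ ν g y

/-- `θ(x)`: the continuous branch of `arg (x − i)`, i.e. `arctan(−1/x)` for `x > 0`,
`arctan(−1/x) − π` for `x < 0`, and `−π/2` at `x = 0`. -/
noncomputable def theta (x : ℝ) : ℝ :=
  if x = 0 then -(Real.pi / 2)
  else if x < 0 then Real.arctan (-1 / x) - Real.pi
  else Real.arctan (-1 / x)

/-- `HasHilbertAt f x v`: the principal value `(1/π) lim_{ε→0⁺} ∫_{|x−y|>ε} f(y)/(x−y) dy`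
exists and equals `v`. -/
def HasHilbertAt (f : ℝ → ℝ) (x v : ℝ) : Prop :=
  Filter.Tendsto
    (fun ε : ℝ => (1 / Real.pi) * ∫ y in {y : ℝ | ε < |x - y|}, f y / (x - y))
    (nhdsWithin 0 (Set.Ioi 0)) (nhds v)

/-- `G(x) = g(x) + (1/2)(μ−ν) ln(x²+1)`. -/
noncomputable def Gfun (μ ν : ℝ) (g : ℝ → ℝ) (x : ℝ) : ℝ :=
  g x + (1 / 2) * (μ - ν) * Real.log (x ^ 2 + 1)

/-- `g` is a solution of system (3.12): `g` is bounded and continuous, the principal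
value `T[g](x) = H(F_g − (μ−ν)θ)(x)` exists for every `x`, and `g = T[g]`. -/
def IsSolution (μ ν : ℝ) (g : ℝ → ℝ) : Prop :=
  Continuous g ∧ (∃ M : ℝ, ∀ x, |g x| ≤ M) ∧
    ∀ x : ℝ, HasHilbertAt (fun y => Fg μ ν g y - (μ - ν) * theta y) x (g x)

/-!
For `x > 0`, `h⁻¹(x) = ∫₀ˣ y^(ν-1) e^{G(y)} dy`. As `G` is nondecreasing on `(0, ∞)`,
`e^{G(y)} ≤ e^{G(x)}` gives the upper bound. The growth bound
`G(y) ≥ G(x) - (μ-ν)(ln(x/y) + 2)` gives `e^{G(y)} ≥ e^{G(x) - 2(μ-ν)} (y/x)^(μ-ν)`, which integrates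
to the lower bound with constant `e^{-2(μ-ν)}/μ ≥ e^{1-ν-6(μ-ν)}` (because `μ ≤ e^{μ-1}`).
Evenness of `G` makes `g` even and hence `h⁻¹` odd, which reduces `x < 0` to `x > 0`.
-/

section RpowMulExp

variable {G : ℝ → ℝ} {x s c : ℝ}

lemma integral_rpow_sub_one (hs : 0 < s) : ∫ y in (0:ℝ)..x, y ^ (s - 1) = x ^ s / s := by
  rw [integral_rpow (Or.inl (by linarith)), sub_add_cancel, zero_rpow hs.ne', sub_zero]

lemma intervalIntegrable_rpow_mul_exp (hG : MonotoneOn G (Ioc 0 x)) (hx : 0 < x) (hs : 0 < s) :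
    IntervalIntegrable (fun y => y ^ (s - 1) * exp (G y)) volume 0 x := by
  have hmaj : IntervalIntegrable (fun y => y ^ (s - 1) * exp (G x)) volume 0 x :=
    (intervalIntegral.intervalIntegrable_rpow' (by linarith)).mul_const _
  refine hmaj.mono_fun' ?_ ?_
  · rw [uIoc_of_le hx.le]
    exact ((measurable_id.pow_const _).aemeasurable.mul
      (measurable_exp.comp_aemeasurable
        (aemeasurable_restrict_of_monotoneOn measurableSet_Ioc hG))).aestronglyMeasurable
  · rw [uIoc_of_le hx.le]
    filter_upwards [ae_restrict_mem measurableSet_Ioc] with y hy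
    rw [norm_of_nonneg (mul_nonneg (rpow_nonneg hy.1.le _) (exp_pos _).le)]
    gcongr
    · exact rpow_nonneg hy.1.le _
    · exact hG hy ⟨hx, le_rfl⟩ hy.2

lemma integral_rpow_mul_exp_le (hG : MonotoneOn G (Ioc 0 x)) (hx : 0 < x) (hs : 0 < s) :
    ∫ y in (0:ℝ)..x, y ^ (s - 1) * exp (G y) ≤ x ^ s / s * exp (G x) := by
  calc _ ≤ ∫ y in (0:ℝ)..x, y ^ (s - 1) * exp (G x) := by
        refine intervalIntegral.integral_mono_on_of_le_Ioo hx.le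
          (intervalIntegrable_rpow_mul_exp hG hx hs)
          ((intervalIntegral.intervalIntegrable_rpow' (by linarith)).mul_const _) fun y hy => ?_
        gcongr
        · exact rpow_nonneg hy.1.le _
        · exact hG (Ioo_subset_Ioc_self hy) ⟨hx, le_rfl⟩ hy.2.le
    _ = x ^ s / s * exp (G x) := by
        rw [intervalIntegral.integral_mul_const, integral_rpow_sub_one hs]

lemma exp_sub_mul_rpow_div_le_integral
    (hint : IntervalIntegrable (fun y => y ^ (s - 1) * exp (G y)) volume 0 x)
    (hx : 0 < x) (hsc : 0 < s + c) (hG : ∀ y ∈ Ioc 0 x, G x - G y ≤ c * (log (x / y) + 2)) :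
    exp (G x - 2 * c) * (x ^ s / (s + c)) ≤ ∫ y in (0:ℝ)..x, y ^ (s - 1) * exp (G y) := by
  have hminor : IntervalIntegrable (fun y => exp (G x - 2 * c) * x ^ (-c) * y ^ (s + c - 1))
      volume 0 x :=
    (intervalIntegral.intervalIntegrable_rpow' (by linarith)).const_mul _
  calc exp (G x - 2 * c) * (x ^ s / (s + c))
      = ∫ y in (0:ℝ)..x, exp (G x - 2 * c) * x ^ (-c) * y ^ (s + c - 1) := by
        rw [intervalIntegral.integral_const_mul, integral_rpow_sub_one hsc, mul_assoc,
          ← mul_div_assoc (x ^ (-c)), ← rpow_add hx, neg_add_cancel_comm_assoc]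
    _ ≤ ∫ y in (0:ℝ)..x, y ^ (s - 1) * exp (G y) := by
        refine intervalIntegral.integral_mono_on_of_le_Ioo hx.le hminor hint fun y hy => ?_
        have hy0 : 0 < y := hy.1
        have hpow : x ^ (-c) * y ^ (s + c - 1) = y ^ (s - 1) * exp (-(c * log (x / y))) := by
          rw [rpow_def_of_pos hx, rpow_def_of_pos hy0, rpow_def_of_pos hy0,
            log_div hx.ne' hy0.ne', ← exp_add, ← exp_add]
          congr 1
          ring
        rw [mul_assoc, hpow, mul_left_comm, ← exp_add]
        gcongr
        linarith [hG y (Ioo_subset_Ioc_self hy)]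

end RpowMulExp

section HInv

variable {μ ν : ℝ} {g : ℝ → ℝ} {x : ℝ}

lemma exp_one_sub_le_exp_neg_div (hμ : 0 < μ) (hνμ : ν ≤ μ) :
    exp (1 - ν - 6 * (μ - ν)) ≤ exp (-(2 * (μ - ν))) / μ := by
  rw [le_div_iff₀ hμ]
  calc exp (1 - ν - 6 * (μ - ν)) * μ ≤ exp (1 - ν - 6 * (μ - ν)) * exp (μ - 1) := by
        gcongr
        linarith [add_one_le_exp (μ - 1)]
    _ ≤ exp (-(2 * (μ - ν))) := by
        rw [← exp_add]
        gcongr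
        linarith

lemma rpow_mul_exp_eq_exp_Gfun (y : ℝ) :
    (y ^ 2 + 1) ^ ((μ - ν) / 2) * exp (g y) = exp (Gfun μ ν g y) := by
  rw [Gfun, rpow_def_of_pos (by positivity), ← exp_add]
  ring_nf

lemma hInvDeriv_of_nonneg (hx : 0 ≤ x) :
    hInvDeriv μ ν g x = x ^ (ν - 1) * exp (Gfun μ ν g x) := by
  rw [hInvDeriv, abs_of_nonneg hx, mul_assoc, rpow_mul_exp_eq_exp_Gfun]

lemma hInv_eq_integral_hInvDeriv (x : ℝ) :
    hInv μ ν g x = ∫ y in (0:ℝ)..x, hInvDeriv μ ν g y := rfl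

lemma hInv_eq_integral_exp_Gfun (hx : 0 ≤ x) :
    hInv μ ν g x = ∫ y in (0:ℝ)..x, y ^ (ν - 1) * exp (Gfun μ ν g y) := by
  rw [hInv_eq_integral_hInvDeriv]
  refine intervalIntegral.integral_congr fun y hy => ?_
  rw [uIcc_of_le hx] at hy
  exact hInvDeriv_of_nonneg hy.1

lemma one_div_mul_hInv_le (hν : 0 < ν) (hG : MonotoneOn (Gfun μ ν g) (Ioi 0)) (hx : 0 < x) :
    1 / x * hInv μ ν g x ≤ 1 / ν * hInvDeriv μ ν g x := by
  rw [hInv_eq_integral_exp_Gfun hx.le, hInvDeriv_of_nonneg hx.le]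
  calc 1 / x * ∫ y in (0:ℝ)..x, y ^ (ν - 1) * exp (Gfun μ ν g y)
      ≤ 1 / x * (x ^ ν / ν * exp (Gfun μ ν g x)) := by
        gcongr
        exact integral_rpow_mul_exp_le (hG.mono Ioc_subset_Ioi_self) hx hν
    _ = 1 / ν * (x ^ (ν - 1) * exp (Gfun μ ν g x)) := by
        rw [rpow_sub_one hx.ne']
        ring

lemma exp_mul_hInvDeriv_le (hν : 0 < ν) (hνμ : ν < μ) (hG : MonotoneOn (Gfun μ ν g) (Ioi 0))
    (hgrowth : ∀ y ∈ Ioc 0 x, Gfun μ ν g x - Gfun μ ν g y ≤ (μ - ν) * (log (x / y) + 2))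
    (hx : 0 < x) :
    exp (1 - ν - 6 * (μ - ν)) * hInvDeriv μ ν g x ≤ 1 / x * hInv μ ν g x := by
  have hμ : 0 < μ := hν.trans hνμ
  have hint := intervalIntegrable_rpow_mul_exp (hG.mono Ioc_subset_Ioi_self) hx hν
  rw [hInv_eq_integral_exp_Gfun hx.le, hInvDeriv_of_nonneg hx.le]
  calc exp (1 - ν - 6 * (μ - ν)) * (x ^ (ν - 1) * exp (Gfun μ ν g x))
      ≤ exp (-(2 * (μ - ν))) / μ * (x ^ (ν - 1) * exp (Gfun μ ν g x)) := by
        gcongr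
        exact exp_one_sub_le_exp_neg_div hμ hνμ.le
    _ = 1 / x * (exp (Gfun μ ν g x - 2 * (μ - ν)) * (x ^ ν / (ν + (μ - ν)))) := by
        rw [rpow_sub_one hx.ne', exp_sub, add_sub_cancel, exp_neg]
        field_simp
    _ ≤ 1 / x * ∫ y in (0:ℝ)..x, y ^ (ν - 1) * exp (Gfun μ ν g y) := by
        gcongr
        exact exp_sub_mul_rpow_div_le_integral hint hx (by linarith) hgrowth

lemma even_of_even_Gfun (heven : Function.Even (Gfun μ ν g)) : Function.Even g := fun x => by
  have h := heven x
  rw [Gfun, Gfun, neg_sq] at h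
  linarith

lemma hInvDeriv_neg (hg : Function.Even g) (x : ℝ) :
    hInvDeriv μ ν g (-x) = hInvDeriv μ ν g x := by
  simp only [hInvDeriv, abs_neg, neg_sq, hg x]

lemma hInv_neg (hg : Function.Even g) (x : ℝ) : hInv μ ν g (-x) = -hInv μ ν g x := by
  have h := intervalIntegral.integral_comp_neg (a := 0) (b := x) (hInvDeriv μ ν g)
  simp only [hInvDeriv_neg hg, neg_zero] at h
  rw [hInv_eq_integral_hInvDeriv, hInv_eq_integral_hInvDeriv, h, intervalIntegral.integral_symm]

end HInv

theorem statement5_general (μ ν : ℝ) (hμ1 : 1 / 2 < μ) (hν1 : 0 < ν) (hν2 : ν < 1 / 2)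
    (g : ℝ → ℝ)
    (heven : ∀ x : ℝ, Gfun μ ν g (-x) = Gfun μ ν g x)
    (hineq : ∀ x y : ℝ, 0 < y → y ≤ x →
      0 ≤ Gfun μ ν g x - Gfun μ ν g y ∧
      Gfun μ ν g x - Gfun μ ν g y ≤ (μ - ν) * (Real.log (x / y) + 2)) :
    ∀ x : ℝ, x ≠ 0 →
      1 / x * hInv μ ν g x ≤
          1 / ν * |x| ^ (ν - 1) * (x ^ 2 + 1) ^ ((μ - ν) / 2) * Real.exp (g x) ∧
      Real.exp (1 - ν - 6 * (μ - ν)) * |x| ^ (ν - 1) * (x ^ 2 + 1) ^ ((μ - ν) / 2) *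
          Real.exp (g x) ≤ 1 / x * hInv μ ν g x := by
  have hνμ : ν < μ := by linarith
  have hG : MonotoneOn (Gfun μ ν g) (Ioi 0) := fun y hy x _ hyx => by
    linarith [(hineq x y hy hyx).1]
  have hbounds : ∀ x, 0 < x → 1 / x * hInv μ ν g x ≤ 1 / ν * hInvDeriv μ ν g x ∧
      exp (1 - ν - 6 * (μ - ν)) * hInvDeriv μ ν g x ≤ 1 / x * hInv μ ν g x := fun x hx =>
    ⟨one_div_mul_hInv_le hν1 hG hx,
      exp_mul_hInvDeriv_le hν1 hνμ hG (fun y hy => (hineq x y hy.1 hy.2).2) hx⟩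
  have hg := even_of_even_Gfun heven
  intro x hx
  suffices 1 / x * hInv μ ν g x ≤ 1 / ν * hInvDeriv μ ν g x ∧
      exp (1 - ν - 6 * (μ - ν)) * hInvDeriv μ ν g x ≤ 1 / x * hInv μ ν g x by
    simpa only [hInvDeriv, mul_assoc] using this
  rcases hx.lt_or_gt with hneg | hpos
  · have hdiv : 1 / -x * hInv μ ν g (-x) = 1 / x * hInv μ ν g x := by
      rw [hInv_neg hg]
      ring
    simpa only [hdiv, hInvDeriv_neg hg] using hbounds (-x) (neg_pos.2 hneg)
  · exact hbounds x hpos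

/-- Lemma 5.2, part 2: for `g ∈ X₁`, two-sided bounds for `h⁻¹(x)/x`. -/
theorem statement5 (μ ν : ℝ) (hμ1 : 1 / 2 < μ) (hμ2 : μ ≤ 2) (hν1 : 0 < ν) (hν2 : ν < 1 / 2)
    (g : ℝ → ℝ) (hg : Continuous g)
    (htop : Filter.Tendsto g Filter.atTop (nhds 0))
    (hbot : Filter.Tendsto g Filter.atBot (nhds 0))
    (heven : ∀ x : ℝ, Gfun μ ν g (-x) = Gfun μ ν g x)
    (hineq : ∀ x y : ℝ, 0 < y → y ≤ x →
      0 ≤ Gfun μ ν g x - Gfun μ ν g y ∧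
      Gfun μ ν g x - Gfun μ ν g y ≤ (μ - ν) * (Real.log (x / y) + 2)) :
    ∀ x : ℝ, x ≠ 0 →
      1 / x * hInv μ ν g x ≤
          1 / ν * |x| ^ (ν - 1) * (x ^ 2 + 1) ^ ((μ - ν) / 2) * Real.exp (g x) ∧
      Real.exp (1 - ν - 6 * (μ - ν)) * |x| ^ (ν - 1) * (x ^ 2 + 1) ^ ((μ - ν) / 2) *
          Real.exp (g x) ≤ 1 / x * hInv μ ν g x :=
  statement5_general μ ν hμ1 hν1 hν2 g heven hineq
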